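/- (Invariance of the no-unlucky-stack property under preprocessing.) Let m_1,…,m_4 ∈ ℝ³ and s_1,…,s_4 ∈ ℝ³ be such that s_1,…,s_4 do NOT form an unlucky stack with respect to m_1,…,m_4. Let ψ(v) = α·σ(v) + v_0 with σ a linear orthogonal map of ℝ³ preserving the plane {z = 0}, α ≠ 0, v_0 ∈ ℝ³, and let φ_0 = φ_{θ,a,b} be any planar rigid motion. Then the points ψ(s_1),…,ψ(s_4) do NOT form an unlucky stack with respect to (φ_0 ∘ ψ)(m_1),…,(φ_0 ∘ ψ)(m_4). -/

import Mathlib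

/-- The planar rigid motion `φ_{θ,a,b} : ℝ³ → ℝ³`,
`(x, y, z) ↦ (x cos θ − y sin θ + a, x sin θ + y cos θ + b, z)`. -/
noncomputable def planarMotion (θ a b : ℝ) (v : EuclideanSpace ℝ (Fin 3)) :
    EuclideanSpace ℝ (Fin 3) :=
  WithLp.toLp 2 ![v 0 * Real.cos θ - v 1 * Real.sin θ + a,
    v 0 * Real.sin θ + v 1 * Real.cos θ + b,
    v 2]

/-- Points `s₁, …, s₄ ∈ ℝ³` form an *unlucky stack* with respect to `m₁, …, m₄ ∈ ℝ³`. -/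
def UnluckyStack (s m : Fin 4 → EuclideanSpace ℝ (Fin 3)) : Prop :=
  (∀ i j : Fin 4, s i 0 = s j 0) ∧ (∀ i j : Fin 4, s i 1 = s j 1) ∧
    (∀ i j : Fin 4, s j 2 - s i 2 = 2 * (m j 2 - m i 2))

lemma axisA (σ : EuclideanSpace ℝ (Fin 3) ≃ₗᵢ[ℝ] EuclideanSpace ℝ (Fin 3))
    (hσ : ∀ w : EuclideanSpace ℝ (Fin 3), w 2 = 0 → (σ w) 2 = 0)
    (v : EuclideanSpace ℝ (Fin 3)) (h0 : σ v 0 = 0) (h1 : σ v 1 = 0) :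
    v 0 = 0 ∧ v 1 = 0 := by
  have key : ∀ i : Fin 3, (EuclideanSpace.single i (1:ℝ)) 2 = 0 → v i = 0 := by
    intro i hi
    have h2 : (σ (EuclideanSpace.single i (1:ℝ))) 2 = 0 := hσ _ hi
    have h3 := σ.inner_map_map v (EuclideanSpace.single i (1:ℝ))
    rw [EuclideanSpace.inner_single_right] at h3
    simp only [conj_trivial, one_mul] at h3
    rw [← h3, PiLp.inner_apply, Fin.sum_univ_three]
    simp [h0, h1, h2, RCLike.inner_apply]
  exact ⟨key 0 (by simp [EuclideanSpace.single_apply]),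
    key 1 (by simp [EuclideanSpace.single_apply])⟩

lemma axisB (σ : EuclideanSpace ℝ (Fin 3) ≃ₗᵢ[ℝ] EuclideanSpace ℝ (Fin 3))
    (hσ : ∀ w : EuclideanSpace ℝ (Fin 3), w 2 = 0 → (σ w) 2 = 0)
    (hσ' : ∀ w : EuclideanSpace ℝ (Fin 3), w 2 = 0 → (σ.symm w) 2 = 0) :
    ∃ c : ℝ, c ≠ 0 ∧ ∀ v : EuclideanSpace ℝ (Fin 3), v 2 = c * (σ v) 2 := by
  set e : EuclideanSpace ℝ (Fin 3) := EuclideanSpace.single 2 (1:ℝ) with he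
  have heax : (σ e) 0 = 0 ∧ (σ e) 1 = 0 := by
    apply axisA σ.symm hσ'
    · simp [he, EuclideanSpace.single_apply]
    · simp [he, EuclideanSpace.single_apply]
  set c : ℝ := (σ e) 2 with hc
  have main : ∀ v : EuclideanSpace ℝ (Fin 3), v 2 = c * (σ v) 2 := by
    intro v
    have h3 := σ.inner_map_map v e
    rw [he, EuclideanSpace.inner_single_right] at h3
    simp only [conj_trivial, one_mul] at h3
    rw [← h3, PiLp.inner_apply, Fin.sum_univ_three]
    simp [← he, ← hc, heax.1, heax.2, RCLike.inner_apply, mul_comm]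
  have hc0 : c ≠ 0 := by
    intro h
    have := main e
    rw [h, zero_mul, he] at this
    simp [EuclideanSpace.single_apply] at this
  exact ⟨c, hc0, main⟩

/-- **invariance of the no-unlucky-stack property under preprocessing.**
If `s₁, …, s₄` do not form an unlucky stack with respect to `m₁, …, m₄`, `ψ(v) =
α·σ(v) + v₀` with `σ` a linear orthogonal map of `ℝ³` preserving the plane `{z = 0}` and
`α ≠ 0`, and `φ₀ = φ_{θ,a,b}` is any planar rigid motion, then `ψ(s₁), …, ψ(s₄)` do not
form an unlucky stack with respect to `(φ₀ ∘ ψ)(m₁), …, (φ₀ ∘ ψ)(m₄)`. -/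
theorem no_unlucky_stack_preprocessing
    (s m : Fin 4 → EuclideanSpace ℝ (Fin 3)) (hs : ¬ UnluckyStack s m)
    (σ : EuclideanSpace ℝ (Fin 3) ≃ₗᵢ[ℝ] EuclideanSpace ℝ (Fin 3))
    (hσ : σ '' {v : EuclideanSpace ℝ (Fin 3) | v 2 = 0} =
      {v : EuclideanSpace ℝ (Fin 3) | v 2 = 0})
    (α : ℝ) (hα : α ≠ 0) (v₀ : EuclideanSpace ℝ (Fin 3))
    (ψ : EuclideanSpace ℝ (Fin 3) → EuclideanSpace ℝ (Fin 3))
    (hψ : ∀ v, ψ v = α • σ v + v₀) (θ a b : ℝ) :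
    ¬ UnluckyStack (fun i => ψ (s i))
      (fun i => planarMotion θ a b (ψ (m i))) := by
  -- σ maps the plane into itself
  have hplane : ∀ w : EuclideanSpace ℝ (Fin 3), w 2 = 0 → (σ w) 2 = 0 := by
    intro w hw
    have : σ w ∈ σ '' {v : EuclideanSpace ℝ (Fin 3) | v 2 = 0} := ⟨w, hw, rfl⟩
    rw [hσ] at this
    exact this
  -- σ.symm maps the plane into itself
  have hplane' : ∀ w : EuclideanSpace ℝ (Fin 3), w 2 = 0 → (σ.symm w) 2 = 0 := by
    intro w hw
    have hw' : w ∈ σ '' {v : EuclideanSpace ℝ (Fin 3) | v 2 = 0} := by rw [hσ]; exact hw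
    obtain ⟨u, hu, rfl⟩ := hw'
    simpa using hu
  obtain ⟨c, hc0, hcz⟩ := axisB σ hplane hplane'
  intro h
  obtain ⟨h0, h1, h2⟩ := h
  apply hs
  have hψi : ∀ (v : EuclideanSpace ℝ (Fin 3)) (i : Fin 3),
      ψ v i = α * (σ v) i + v₀ i := by
    intro v i
    rw [hψ]
    simp [PiLp.add_apply, PiLp.smul_apply]
  refine ⟨?_, ?_, ?_⟩
  · intro i j
    have e0 : α * (σ (s i)) 0 + v₀ 0 = α * (σ (s j)) 0 + v₀ 0 := by
      have := h0 i j; simpa [hψi] using this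
    have e1 : α * (σ (s i)) 1 + v₀ 1 = α * (σ (s j)) 1 + v₀ 1 := by
      have := h1 i j; simpa [hψi] using this
    have d0 : (σ (s i - s j)) 0 = 0 := by
      rw [map_sub]
      have : (σ (s i)) 0 = (σ (s j)) 0 := by
        exact mul_left_cancel₀ hα (by linarith)
      simp [PiLp.sub_apply, this]
    have d1 : (σ (s i - s j)) 1 = 0 := by
      rw [map_sub]
      have : (σ (s i)) 1 = (σ (s j)) 1 := by
        exact mul_left_cancel₀ hα (by linarith)
      simp [PiLp.sub_apply, this]
    have := axisA σ hplane (s i - s j) d0 d1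
    have := this.1
    rw [PiLp.sub_apply] at this
    linarith
  · intro i j
    have e0 : α * (σ (s i)) 0 + v₀ 0 = α * (σ (s j)) 0 + v₀ 0 := by
      have := h0 i j; simpa [hψi] using this
    have e1 : α * (σ (s i)) 1 + v₀ 1 = α * (σ (s j)) 1 + v₀ 1 := by
      have := h1 i j; simpa [hψi] using this
    have d0 : (σ (s i - s j)) 0 = 0 := by
      rw [map_sub]
      have : (σ (s i)) 0 = (σ (s j)) 0 := by
        exact mul_left_cancel₀ hα (by linarith)
      simp [PiLp.sub_apply, this]
    have d1 : (σ (s i - s j)) 1 = 0 := by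
      rw [map_sub]
      have : (σ (s i)) 1 = (σ (s j)) 1 := by
        exact mul_left_cancel₀ hα (by linarith)
      simp [PiLp.sub_apply, this]
    have := axisA σ hplane (s i - s j) d0 d1
    have := this.2
    rw [PiLp.sub_apply] at this
    linarith
  · intro i j
    have hz := h2 i j
    have hpm : ∀ v : EuclideanSpace ℝ (Fin 3), planarMotion θ a b v 2 = v 2 := by
      intro v; simp [planarMotion]
    simp only [hpm, hψi] at hz
    have hz' : (σ (s j)) 2 - (σ (s i)) 2 = 2 * ((σ (m j)) 2 - (σ (m i)) 2) :=
      mul_left_cancel₀ hα (by linear_combination hz)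
    rw [hcz (s j), hcz (s i), hcz (m j), hcz (m i)]
    linear_combination c * hz'
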